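/- arXiv:math/9802025 — 4 statements merged into one kernel-verified Lean document; each statement's English description precedes it below -/
import Mathlib

section
/- For every finite simple graph G, the bandwidth satisfies B(G) ≥ β(G), i.e., the bandwidth is at least the local density. -/
/-- The bandwidth of an integer labeling `f` of the vertices of `G`:
the maximum of `|f u - f v|` over edges `uv` of `G`. -/
noncomputable def bwOf {V : Type*} (G : SimpleGraph V) (f : V → ℤ) : ℕ :=
  sSup {n | ∃ u v, G.Adj u v ∧ n = (f u - f v).natAbs}

/-- The bandwidth of a graph: the minimum of `bwOf G f` over injections `f : V → ℤ`. -/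
noncomputable def bandwidth {V : Type*} (G : SimpleGraph V) : ℕ :=
  sInf {n | ∃ f : V → ℤ, Function.Injective f ∧ n = bwOf G f}

/-- The local density of a graph: the maximum of `⌈(n(H) - 1)/diam H⌉` over connected
subgraphs `H` of `G` with at least two vertices. -/
noncomputable def localDensity {V : Type*} (G : SimpleGraph V) : ℕ :=
  sSup {d | ∃ H : G.Subgraph, H.coe.Connected ∧ 2 ≤ H.verts.ncard ∧
    d = (H.verts.ncard - 1) ⌈/⌉ H.coe.diam}

private lemma edge_le_bwOf {V : Type*} [Fintype V] (G : SimpleGraph V) (f : V → ℤ)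
    {u v : V} (h : G.Adj u v) : (f u - f v).natAbs ≤ bwOf G f := by
  have hb : BddAbove {n | ∃ u v, G.Adj u v ∧ n = (f u - f v).natAbs} := by
    apply Set.Finite.bddAbove
    apply Set.Finite.subset (Set.finite_range fun p : V × V => (f p.1 - f p.2).natAbs)
    rintro n ⟨u, v, _, rfl⟩
    exact ⟨(u, v), rfl⟩
  exact le_csSup hb ⟨u, v, h, rfl⟩

private lemma walk_bound {V : Type*} [Fintype V] (G : SimpleGraph V) (f : V → ℤ)
    (H : G.Subgraph) {x y : H.verts} (p : H.coe.Walk x y) :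
    (f x.1 - f y.1).natAbs ≤ p.length * bwOf G f := by
  induction p with
  | nil => simp
  | @cons a c d h p ih =>
    calc (f a.1 - f d.1).natAbs
        ≤ (f a.1 - f c.1).natAbs + (f c.1 - f d.1).natAbs := by
          have := Int.natAbs_add_le (f a.1 - f c.1) (f c.1 - f d.1)
          simpa using this
      _ ≤ bwOf G f + p.length * bwOf G f :=
          Nat.add_le_add (edge_le_bwOf G f (H.adj_sub ((SimpleGraph.Subgraph.coe_adj H _ _).mp h))) ih
      _ = (p.cons h).length * bwOf G f := by
          simp [SimpleGraph.Walk.length_cons]; ring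

private lemma key {V : Type*} [Fintype V] (G : SimpleGraph V) (f : V → ℤ)
    (hf : Function.Injective f) (H : G.Subgraph) (hc : H.coe.Connected)
    (h2 : 2 ≤ H.verts.ncard) :
    (H.verts.ncard - 1) ⌈/⌉ H.coe.diam ≤ bwOf G f := by
  classical
  haveI : Fintype ↥H.verts := Fintype.ofFinite _
  have hnt' : H.verts.Nontrivial := (Set.one_lt_ncard H.verts.toFinite).mp h2
  haveI hnt : Nontrivial ↥H.verts := hnt'.coe_sort
  -- ediam is finite
  have hne : H.coe.ediam ≠ ⊤ := by
    have hle : H.coe.ediam ≤ (Fintype.card ↥H.verts : ℕ∞) := by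
      rw [SimpleGraph.ediam_def]
      apply iSup_le
      intro p
      obtain ⟨w⟩ := hc.preconnected p.1 p.2
      calc H.coe.edist p.1 p.2 ≤ (w.bypass.length : ℕ∞) := SimpleGraph.edist_le _
        _ ≤ _ := by exact_mod_cast w.bypass_isPath.length_lt.le
    exact ne_top_of_le_ne_top (by simp [H.verts.toFinite]) hle
  have hd : H.coe.diam ≠ 0 := by
    rw [ne_eq, SimpleGraph.diam_eq_zero]
    rintro (h | h)
    · exact hne h
    · exact not_subsingleton _ h
  -- min and max of f on H.verts
  obtain ⟨u, hu, humin⟩ := Set.exists_min_image H.verts f H.verts.toFinite hnt'.nonempty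
  obtain ⟨v, hv, hvmax⟩ := Set.exists_max_image H.verts f H.verts.toFinite hnt'.nonempty
  have huv : f u ≤ f v := humin v hv
  -- cardinality bound
  have hcard : H.verts.ncard ≤ (f v - f u).toNat + 1 := by
    have himg : H.verts.toFinset.image f ⊆ Finset.Icc (f u) (f v) := by
      intro x hx
      obtain ⟨a, ha, rfl⟩ := Finset.mem_image.mp hx
      rw [Set.mem_toFinset] at ha
      exact Finset.mem_Icc.mpr ⟨humin a ha, hvmax a ha⟩
    have h1 : (H.verts.toFinset.image f).card = H.verts.ncard := by
      rw [Finset.card_image_of_injective _ hf, Set.ncard_eq_toFinset_card']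
    have h2' := Finset.card_le_card himg
    rw [Int.card_Icc] at h2'
    omega
  -- distance bound
  obtain ⟨p, hp⟩ := (hc.preconnected ⟨u, hu⟩ ⟨v, hv⟩).exists_walk_length_eq_dist
  have hwb := walk_bound G f H p
  rw [hp] at hwb
  have hdist : H.coe.dist ⟨u, hu⟩ ⟨v, hv⟩ ≤ H.coe.diam := SimpleGraph.dist_le_diam hne
  have hmain : H.verts.ncard - 1 ≤ H.coe.diam * bwOf G f := by
    have h3 : (f u - f v).natAbs = (f v - f u).toNat := by omega
    calc H.verts.ncard - 1 ≤ (f v - f u).toNat := by omega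
      _ = (f u - f v).natAbs := h3.symm
      _ ≤ H.coe.dist ⟨u, hu⟩ ⟨v, hv⟩ * bwOf G f := hwb
      _ ≤ H.coe.diam * bwOf G f := Nat.mul_le_mul_right _ hdist
  exact (ceilDiv_le_iff_le_mul (Nat.pos_of_ne_zero hd)).mpr hmain

/-- For every finite simple graph, the bandwidth is at least the local density. -/
theorem localDensity_le_bandwidth {V : Type*} [Fintype V] (G : SimpleGraph V) :
    localDensity G ≤ bandwidth G := by
  classical
  -- bandwidth is attained
  have hbw : ∃ f : V → ℤ, Function.Injective f ∧ bandwidth G = bwOf G f := by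
    have hne : {n | ∃ f : V → ℤ, Function.Injective f ∧ n = bwOf G f}.Nonempty := by
      refine ⟨bwOf G (fun v => ((Fintype.equivFin V v : ℕ) : ℤ)), _, ?_, rfl⟩
      intro a b hab
      simp only at hab
      have : (Fintype.equivFin V a : ℕ) = (Fintype.equivFin V b : ℕ) := by exact_mod_cast hab
      exact (Fintype.equivFin V).injective (Fin.ext this)
    exact Nat.sInf_mem hne
  obtain ⟨f, hf, hfeq⟩ := hbw
  rw [hfeq]
  rcases Set.eq_empty_or_nonempty {d | ∃ H : G.Subgraph, H.coe.Connected ∧ 2 ≤ H.verts.ncard ∧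
      d = (H.verts.ncard - 1) ⌈/⌉ H.coe.diam} with he | hne
  · rw [localDensity, he, csSup_empty]
    exact Nat.zero_le _
  · apply csSup_le hne
    rintro d ⟨H, hc, h2, rfl⟩
    exact key G f hf H hc h2
end

section
/- For every integer k ≥ 3, the bandwidth of the block graph H_k satisfies B(H_k) ≥ k + 1, while its local density is β(H_k) = k; thus H_k is a block graph of diameter 3 whose bandwidth exceeds its local density. -/
/-- Underlying asymmetric relation for `Hgraph k`.  The vertices `(i, a) : Fin 3 × Fin k`
form the three cliques `X` (`i = 0`), `Y` (`i = 1`), `Z` (`i = 2`), with `x = (0,0)`,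
`y = (1,0)`, `z = (2,0)`; the extra vertex `w` is `Sum.inr ()`, and `{x, y, z, w}`
forms the fourth clique. -/
def HRel (k : ℕ) : (Fin 3 × Fin k) ⊕ Unit → (Fin 3 × Fin k) ⊕ Unit → Prop
  | Sum.inl (i, a), Sum.inl (j, b) => (i = j ∧ a ≠ b) ∨ (i ≠ j ∧ a.val = 0 ∧ b.val = 0)
  | Sum.inl (_, a), Sum.inr _ => a.val = 0
  | _, _ => False

/-- The block graph `H_k`. -/
def Hgraph (k : ℕ) : SimpleGraph ((Fin 3 × Fin k) ⊕ Unit) :=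
  SimpleGraph.fromRel (HRel k)

section Helpers

open SimpleGraph

variable {k : ℕ}

lemma adj_clique (i : Fin 3) {a b : Fin k} (h : a ≠ b) :
    (Hgraph k).Adj (Sum.inl (i,a)) (Sum.inl (i,b)) := by
  rw [Hgraph, SimpleGraph.fromRel_adj]
  exact ⟨by simp [h], Or.inl (Or.inl ⟨rfl, h⟩)⟩

lemma adj_specs {i j : Fin 3} {a b : Fin k} (hij : i ≠ j) (ha : a.val = 0) (hb : b.val = 0) :
    (Hgraph k).Adj (Sum.inl (i,a)) (Sum.inl (j,b)) := by
  rw [Hgraph, SimpleGraph.fromRel_adj]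
  exact ⟨by simp [hij], Or.inl (Or.inr ⟨hij, ha, hb⟩)⟩

lemma adj_w (i : Fin 3) {a : Fin k} (ha : a.val = 0) :
    (Hgraph k).Adj (Sum.inl (i,a)) (Sum.inr ()) := by
  rw [Hgraph, SimpleGraph.fromRel_adj]
  exact ⟨by simp, Or.inl ha⟩

lemma adj_inl_inl {i j : Fin 3} {a b : Fin k}
    (h : (Hgraph k).Adj (Sum.inl (i,a)) (Sum.inl (j,b))) :
    (i = j ∧ a ≠ b) ∨ (i ≠ j ∧ a.val = 0 ∧ b.val = 0) := by
  rw [Hgraph, SimpleGraph.fromRel_adj] at h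
  rcases h.2 with h' | h'
  · exact h'
  · rcases h' with ⟨hij, hab⟩ | ⟨hij, hb, ha⟩
    · exact Or.inl ⟨hij.symm, hab.symm⟩
    · exact Or.inr ⟨hij.symm, ha, hb⟩

lemma adj_inl_inr {i : Fin 3} {a : Fin k} {u : Unit}
    (h : (Hgraph k).Adj (Sum.inl (i,a)) (Sum.inr u)) : a.val = 0 := by
  rw [Hgraph, SimpleGraph.fromRel_adj] at h
  rcases h.2 with h' | h'
  · exact h'
  · exact h'.elim

lemma not_adj_cross {i j : Fin 3} {a b : Fin k} (hij : i ≠ j) (ha : a.val ≠ 0) :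
    ¬ (Hgraph k).Adj (Sum.inl (i,a)) (Sum.inl (j,b)) := fun h => by
  rcases adj_inl_inl h with ⟨h1, _⟩ | ⟨_, h2, _⟩
  · exact hij h1
  · exact ha h2

lemma no_common {i j : Fin 3} {a b : Fin k} (hij : i ≠ j) (ha : a.val ≠ 0) (hbv : b.val ≠ 0)
    (m : (Fin 3 × Fin k) ⊕ Unit) (h1 : (Hgraph k).Adj (Sum.inl (i,a)) m)
    (h2 : (Hgraph k).Adj m (Sum.inl (j,b))) : False := by
  rcases m with ⟨i', cc⟩ | u
  · rcases adj_inl_inl h1 with ⟨e1, _⟩ | ⟨_, e, _⟩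
    · rcases adj_inl_inl h2 with ⟨e2, _⟩ | ⟨_, _, e⟩
      · exact hij (e1 ▸ e2)
      · exact hbv e
    · exact ha e
  · exact ha (adj_inl_inr h1)

lemma card_HV (k : ℕ) : Fintype.card ((Fin 3 × Fin k) ⊕ Unit) = 3*k+1 := by simp

/-- the "special projection" sending each clique vertex to its distinguished vertex. -/
def sp (k : ℕ) : (Fin 3 × Fin k) ⊕ Unit → (Fin 3 × Fin k) ⊕ Unit
  | Sum.inl (i, a) => Sum.inl (i, ⟨0, Nat.lt_of_le_of_lt (Nat.zero_le _) a.isLt⟩)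
  | Sum.inr _ => Sum.inr ()

lemma hsp1 (k : ℕ) : ∀ u, u = sp k u ∨ (Hgraph k).Adj u (sp k u) := by
  intro u
  rcases u with ⟨i, a⟩ | u
  · rcases eq_or_ne a.val 0 with h | h
    · left
      show Sum.inl (i, a) = Sum.inl (i, _)
      exact congrArg Sum.inl (congrArg (Prod.mk i) (Fin.ext h))
    · right
      exact adj_clique i (fun he => h (by rw [he]))
  · left; rfl

lemma hsp2 (k : ℕ) : ∀ u v, sp k u = sp k v ∨ (Hgraph k).Adj (sp k u) (sp k v) := by
  intro u v
  rcases u with ⟨i, a⟩ | u <;> rcases v with ⟨j, b⟩ | v <;> simp only [sp]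
  · rcases eq_or_ne i j with rfl | h
    · left; rfl
    · right; exact adj_specs h rfl rfl
  · right; exact adj_w i rfl
  · right
    exact (adj_w (a := ⟨0, Nat.lt_of_le_of_lt (Nat.zero_le _) b.isLt⟩) j rfl).symm
  · left; trivial

lemma three_le_length {V : Type*} {G : SimpleGraph V} {u v : V}
    (h0 : u ≠ v) (h1 : ¬G.Adj u v) (h2 : ∀ m, G.Adj u m → ¬G.Adj m v)
    (p : G.Walk u v) : 3 ≤ p.length := by
  cases p with
  | nil => exact absurd rfl h0
  | cons h q =>
    cases q with
    | nil => exact absurd h h1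
    | cons h' q' =>
      cases q' with
      | nil => exact absurd h' (h2 _ h)
      | cons h'' q'' => simp [SimpleGraph.Walk.length_cons]

lemma three_le_dist {V : Type*} {G : SimpleGraph V} {u v : V}
    (h0 : u ≠ v) (h1 : ¬G.Adj u v) (h2 : ∀ m, G.Adj u m → ¬G.Adj m v)
    (hr : G.Reachable u v) : 3 ≤ G.dist u v := by
  obtain ⟨p, hp⟩ := hr.exists_walk_length_eq_dist
  exact hp ▸ three_le_length h0 h1 h2 p

lemma dist_le_one_of_adj {V : Type*} {G : SimpleGraph V} {u v : V} (h : G.Adj u v) :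
    G.dist u v ≤ 1 := SimpleGraph.dist_le (SimpleGraph.Walk.cons h SimpleGraph.Walk.nil)

lemma spec_preconnected_dist {V : Type*} {G : SimpleGraph V} (s : V → V)
    (h1 : ∀ u, u = s u ∨ G.Adj u (s u))
    (h2 : ∀ u v, s u = s v ∨ G.Adj (s u) (s v)) :
    G.Preconnected ∧ ∀ u v, G.dist u v ≤ 3 := by
  have hr1 : ∀ u, G.Reachable u (s u) := fun u =>
    (h1 u).elim (fun h => h ▸ Reachable.refl u) SimpleGraph.Adj.reachable
  have hr2 : ∀ u v, G.Reachable (s u) (s v) := fun u v =>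
    (h2 u v).elim (fun h => h ▸ Reachable.refl _) SimpleGraph.Adj.reachable
  have hpre : G.Preconnected := fun u v => ((hr1 u).trans (hr2 u v)).trans (hr1 v).symm
  refine ⟨hpre, fun u v => ?_⟩
  have : Nonempty V := ⟨u⟩
  have hconn : G.Connected := ⟨hpre⟩
  have hd1 : ∀ u, G.dist u (s u) ≤ 1 := fun u =>
    (h1 u).elim (fun h => by rw [← h, SimpleGraph.dist_self]; omega) dist_le_one_of_adj
  have hd2 : ∀ u v, G.dist (s u) (s v) ≤ 1 := fun u v =>
    (h2 u v).elim (fun h => by rw [h, SimpleGraph.dist_self]; omega) dist_le_one_of_adj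
  calc G.dist u v ≤ G.dist u (s u) + G.dist (s u) v := hconn.dist_triangle
    _ ≤ G.dist u (s u) + (G.dist (s u) (s v) + G.dist (s v) v) :=
        Nat.add_le_add_left hconn.dist_triangle _
    _ ≤ 3 := by
        have := hd1 u
        have := hd2 u v
        have h3 : G.dist (s v) v ≤ 1 := by rw [SimpleGraph.dist_comm]; exact hd1 v
        omega

lemma diam_eq_three' {V : Type*} [Finite V] {G : SimpleGraph V}
    (hpre : G.Preconnected) (hle : ∀ u v, G.dist u v ≤ 3)
    {p q : V} (h3 : 3 ≤ G.dist p q) : G.diam = 3 := by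
  have : Nonempty V := ⟨p⟩
  have hne : G.ediam ≠ ⊤ := by
    obtain ⟨u, v, huv⟩ := G.exists_edist_eq_ediam_of_finite
    rw [← huv]
    exact (SimpleGraph.edist_ne_top_iff_reachable).mpr (hpre u v)
  have hub : G.diam ≤ 3 := by
    obtain ⟨u, v, huv⟩ := G.exists_dist_eq_diam
    rw [← huv]; exact hle u v
  have hlb : 3 ≤ G.diam := le_trans h3 (SimpleGraph.dist_le_diam hne)
  omega

end Helpers

open SimpleGraph in
lemma bw_core (k : ℕ) (hk : 3 ≤ k) (f : (Fin 3 × Fin k) ⊕ Unit → ℤ)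
    (hf : Function.Injective f)
    (hb : ∀ u v, (Hgraph k).Adj u v → |f u - f v| ≤ (k : ℤ)) : False := by
  have hk3 : (3:ℤ) ≤ (k:ℤ) := by exact_mod_cast hk
  obtain ⟨z0, hz0⟩ : ∃ z0 : Fin k, z0.val = 0 := ⟨⟨0, by omega⟩, rfl⟩
  set c : ℤ := min (min (f (Sum.inl (0, z0))) (f (Sum.inl (1, z0))))
      (min (f (Sum.inl (2, z0))) (f (Sum.inr ()))) with hc
  have htri : ∀ i : Fin 3, i = 0 ∨ i = 1 ∨ i = 2 := by decide
  have hlowi : ∀ i : Fin 3, c ≤ f (Sum.inl (i, z0)) := by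
    intro i
    rcases htri i with rfl | rfl | rfl
    · exact le_trans (min_le_left _ _) (min_le_left _ _)
    · exact le_trans (min_le_left _ _) (min_le_right _ _)
    · exact le_trans (min_le_right _ _) (min_le_left _ _)
  have hloww : c ≤ f (Sum.inr ()) := le_trans (min_le_right _ _) (min_le_right _ _)
  have hadjp : ∀ i j : Fin 3, i ≠ j →
      |f (Sum.inl (i, z0)) - f (Sum.inl (j, z0))| ≤ (k:ℤ) :=
    fun i j h => hb _ _ (adj_specs h hz0 hz0)
  have hadjw : ∀ i : Fin 3, |f (Sum.inl (i, z0)) - f (Sum.inr ())| ≤ (k:ℤ) :=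
    fun i => hb _ _ (adj_w i hz0)
  -- upper bounds on specials
  have hupaux : ∀ i j : Fin 3, f (Sum.inl (i, z0)) - k ≤ f (Sum.inl (j, z0)) := by
    intro i j
    rcases eq_or_ne i j with rfl | h
    · linarith
    · linarith [(abs_le.mp (hadjp i j h)).2]
  have hupi : ∀ i : Fin 3, f (Sum.inl (i, z0)) ≤ c + k := by
    intro i
    have hw : f (Sum.inl (i, z0)) - k ≤ f (Sum.inr ()) := by
      linarith [(abs_le.mp (hadjw i)).2]
    have : f (Sum.inl (i, z0)) - k ≤ c :=
      le_min (le_min (hupaux i 0) (hupaux i 1)) (le_min (hupaux i 2) hw)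
    linarith
  have hupw : f (Sum.inr ()) ≤ c + k := by
    have haux : ∀ j : Fin 3, f (Sum.inr ()) - k ≤ f (Sum.inl (j, z0)) := by
      intro j; linarith [(abs_le.mp (hadjw j)).1]
    have : f (Sum.inr ()) - k ≤ c :=
      le_min (le_min (haux 0) (haux 1)) (le_min (haux 2) (by linarith))
    linarith
  have hclique : ∀ (i : Fin 3) (a : Fin k),
      |f (Sum.inl (i, a)) - f (Sum.inl (i, z0))| ≤ (k:ℤ) := by
    intro i a
    rcases eq_or_ne a z0 with rfl | h
    · simp
    · exact hb _ _ (adj_clique i h)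
  have hglobal : ∀ v, c - k ≤ f v ∧ f v ≤ c + 2*k := by
    intro v
    rcases v with ⟨i, a⟩ | u
    · have h1 := abs_le.mp (hclique i a)
      exact ⟨by linarith [hlowi i, h1.1], by linarith [hupi i, h1.2]⟩
    · cases u; exact ⟨by linarith, by linarith⟩
  have hcard : Fintype.card ((Fin 3 × Fin k) ⊕ Unit) = 3*k+1 := by simp
  have himg : Finset.image f Finset.univ = Finset.Icc (c - k) (c + 2*k) := by
    apply Finset.eq_of_subset_of_card_le
    · intro m hm
      rw [Finset.mem_image] at hm
      obtain ⟨v, -, rfl⟩ := hm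
      rw [Finset.mem_Icc]; exact hglobal v
    · rw [Int.card_Icc, Finset.card_image_of_injective _ hf, Finset.card_univ, hcard]
      omega
  have hsurj : ∀ m : ℤ, c - k ≤ m → m ≤ c + 2*k → ∃ v, f v = m := by
    intro m h1 h2
    have : m ∈ Finset.image f Finset.univ := by rw [himg, Finset.mem_Icc]; exact ⟨h1, h2⟩
    rw [Finset.mem_image] at this
    obtain ⟨v, -, hv⟩ := this
    exact ⟨v, hv⟩
  obtain ⟨v0, hv0⟩ := hsurj (c - k) le_rfl (by linarith)
  obtain ⟨v1, hv1⟩ := hsurj (c + 2*k) (by linarith) le_rfl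
  rcases v0 with ⟨i, a0⟩ | u0
  swap
  · cases u0; linarith [hloww, hv0.le, hv0.ge]
  rcases v1 with ⟨j, b0⟩ | u1
  swap
  · cases u1; linarith [hupw, hv1.le, hv1.ge]
  have hXi0 : f (Sum.inl (i, z0)) = c := by
    have h := abs_le.mp (hclique i a0)
    rw [hv0] at h
    have := hlowi i
    linarith [h.1]
  have hXj0 : f (Sum.inl (j, z0)) = c + k := by
    have h := abs_le.mp (hclique j b0)
    rw [hv1] at h
    have := hupi j
    linarith [h.2]
  have hij : i ≠ j := by
    intro h; rw [h, hXj0] at hXi0; linarith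
  have hcliquei_up : ∀ a : Fin k, f (Sum.inl (i, a)) ≤ c := by
    intro a
    rcases eq_or_ne a a0 with rfl | h
    · rw [hv0]; linarith
    · have h2 := (abs_le.mp (hb _ _ (adj_clique i h))).2
      rw [hv0] at h2; linarith
  have hcliquej_lo : ∀ b : Fin k, c + k ≤ f (Sum.inl (j, b)) := by
    intro b
    rcases eq_or_ne b b0 with rfl | h
    · rw [hv1]; linarith
    · have h2 := (abs_le.mp (hb _ _ (adj_clique j h))).1
      rw [hv1] at h2; linarith
  have htrip : ∀ p q : Fin 3, p ≠ q → ∃ l : Fin 3, l ≠ p ∧ l ≠ q := by decide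
  have huniq4 : ∀ p q r s : Fin 3, p ≠ q → r ≠ p → r ≠ q → s ≠ p → s ≠ q → r = s := by decide
  obtain ⟨l, hli, hlj⟩ := htrip i j hij
  have huniq : ∀ p : Fin 3, p ≠ i → p ≠ j → p = l := fun p h1 h2 =>
    huniq4 i j p l hij h1 h2 hli hlj
  -- images of the two extreme cliques
  have hinjI : ∀ (m : Fin 3), Function.Injective (fun a : Fin k => f (Sum.inl (m, a))) := by
    intro m a b hab
    have := hf hab
    simpa using this
  set imgI : Finset ℤ := Finset.image (fun a : Fin k => f (Sum.inl (i, a))) Finset.univ with hI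
  set imgJ : Finset ℤ := Finset.image (fun a : Fin k => f (Sum.inl (j, a))) Finset.univ with hJ
  have cardI : imgI.card = k := by
    rw [hI, Finset.card_image_of_injective _ (hinjI i), Finset.card_univ, Fintype.card_fin]
  have cardJ : imgJ.card = k := by
    rw [hJ, Finset.card_image_of_injective _ (hinjI j), Finset.card_univ, Fintype.card_fin]
  -- find a' in [c-k, c] missed by clique i
  obtain ⟨a', ha'Icc, ha'ni⟩ : ∃ a' ∈ Finset.Icc (c-k) c, a' ∉ imgI := by
    by_contra hcon
    push_neg at hcon
    have hle := Finset.card_le_card hcon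
    rw [Int.card_Icc] at hle
    omega
  rw [Finset.mem_Icc] at ha'Icc
  have ha'ne : a' < c := by
    rcases lt_or_eq_of_le ha'Icc.2 with h | h
    · exact h
    · exfalso; apply ha'ni; rw [h, ← hXi0]
      exact Finset.mem_image_of_mem _ (Finset.mem_univ z0)
  obtain ⟨b', hb'Icc, hb'nj⟩ : ∃ b' ∈ Finset.Icc (c+k) (c+2*k), b' ∉ imgJ := by
    by_contra hcon
    push_neg at hcon
    have hle := Finset.card_le_card hcon
    rw [Int.card_Icc] at hle
    omega
  rw [Finset.mem_Icc] at hb'Icc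
  have hb'ne : c + k < b' := by
    rcases lt_or_eq_of_le hb'Icc.1 with h | h
    · exact h
    · exfalso; apply hb'nj; rw [← h, ← hXj0]
      exact Finset.mem_image_of_mem _ (Finset.mem_univ z0)
  -- the vertex carrying a'
  obtain ⟨t, ht⟩ := hsurj a' ha'Icc.1 (by linarith)
  obtain ⟨ta, rfl⟩ : ∃ ta : Fin k, t = Sum.inl (l, ta) := by
    rcases t with ⟨i', aa⟩ | u
    · rcases eq_or_ne i' i with rfl | hne1
      · exfalso; apply ha'ni; rw [← ht]
        exact Finset.mem_image_of_mem _ (Finset.mem_univ aa)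
      · rcases eq_or_ne i' j with rfl | hne2
        · exfalso; have := hcliquej_lo aa; rw [ht] at this; linarith [ha'Icc.2]
        · exact ⟨aa, by rw [huniq i' hne1 hne2]⟩
    · exfalso; cases u
      rw [ht] at hloww; linarith
  obtain ⟨t', ht'⟩ := hsurj b' (by linarith) hb'Icc.2
  obtain ⟨tb, rfl⟩ : ∃ tb : Fin k, t' = Sum.inl (l, tb) := by
    rcases t' with ⟨i', aa⟩ | u
    · rcases eq_or_ne i' j with rfl | hne1
      · exfalso; apply hb'nj; rw [← ht']
        exact Finset.mem_image_of_mem _ (Finset.mem_univ aa)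
      · rcases eq_or_ne i' i with rfl | hne2
        · exfalso; have := hcliquei_up aa; rw [ht'] at this; linarith
        · exact ⟨aa, by rw [huniq i' hne2 hne1]⟩
    · exfalso; cases u
      rw [ht'] at hupw; linarith
  have hane : ta ≠ tb := by
    intro h
    rw [h, ht'] at ht
    linarith
  have hfin := abs_le.mp (hb _ _ (adj_clique l hane))
  rw [ht, ht'] at hfin
  linarith [hfin.1]

open SimpleGraph in
lemma ld_core (k : ℕ) (hk : 3 ≤ k) (H : (Hgraph k).Subgraph) (hc : H.coe.Connected)
    (h2 : 2 ≤ H.verts.ncard) : (H.verts.ncard - 1) ⌈/⌉ H.coe.diam ≤ k := by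
  obtain ⟨z0, hz0⟩ : ∃ z0 : Fin k, z0.val = 0 := ⟨⟨0, by omega⟩, rfl⟩
  have htri : ∀ i : Fin 3, i = 0 ∨ i = 1 ∨ i = 2 := by decide
  have hfin : H.verts.Finite := Set.toFinite _
  haveI hnE : Nonempty H.verts := hc.nonempty
  have hnetop : H.coe.ediam ≠ ⊤ := by
    obtain ⟨u, v, huv⟩ := H.coe.exists_edist_eq_ediam_of_finite
    rw [← huv]
    exact SimpleGraph.edist_ne_top_iff_reachable.mpr (hc.preconnected u v)
  obtain ⟨uu, huu, vv, hvv, huvne⟩ := (Set.one_lt_ncard hfin).mp (by omega)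
  have hdpos : 0 < H.coe.diam := by
    have h1 := hc.pos_dist_of_ne (u := ⟨uu, huu⟩) (v := ⟨vv, hvv⟩)
        (fun h => huvne (congrArg Subtype.val h))
    exact lt_of_lt_of_le h1 (SimpleGraph.dist_le_diam hnetop)
  rw [ceilDiv_le_iff_le_mul hdpos]
  have hncard_le : H.verts.ncard ≤ 3*k+1 := by
    have h := Set.ncard_le_ncard (Set.subset_univ H.verts) Set.finite_univ
    rwa [Set.ncard_univ, Nat.card_eq_fintype_card, card_HV] at h
  have hncard_of_sub : ∀ (s : Finset ((Fin 3 × Fin k) ⊕ Unit)),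
      H.verts ⊆ ↑s → H.verts.ncard ≤ s.card := by
    intro s hs
    have := Set.ncard_le_ncard hs s.finite_toSet
    rwa [Set.ncard_coe_finset] at this
  set specFin : Finset ((Fin 3 × Fin k) ⊕ Unit) :=
    {Sum.inl (0, z0), Sum.inl (1, z0), Sum.inl (2, z0), Sum.inr ()} with hspecFin
  have hspec4 : specFin.card ≤ 4 := by
    have h1 := Finset.card_insert_le (Sum.inl (0, z0))
        ({Sum.inl (1, z0), Sum.inl (2, z0), Sum.inr ()} : Finset ((Fin 3 × Fin k) ⊕ Unit))
    have h2 := Finset.card_insert_le (Sum.inl (1, z0))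
        ({Sum.inl (2, z0), Sum.inr ()} : Finset ((Fin 3 × Fin k) ⊕ Unit))
    have h3 := Finset.card_insert_le (Sum.inl (2, z0))
        ({Sum.inr ()} : Finset ((Fin 3 × Fin k) ⊕ Unit))
    have h4 : ({Sum.inr ()} : Finset ((Fin 3 × Fin k) ⊕ Unit)).card = 1 :=
      Finset.card_singleton _
    rw [hspecFin]
    omega
  by_cases hA : ∃ (i j : Fin 3) (a b : Fin k), i ≠ j ∧ a.val ≠ 0 ∧ b.val ≠ 0 ∧
      Sum.inl (i,a) ∈ H.verts ∧ Sum.inl (j,b) ∈ H.verts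
  · obtain ⟨i, j, a, b, hij, ha, hbv, hu, hv⟩ := hA
    have h3 : 3 ≤ H.coe.diam := by
      obtain ⟨p, hp⟩ := (hc.preconnected ⟨_, hu⟩ ⟨_, hv⟩).exists_walk_length_eq_dist
      have hlen : 3 ≤ p.length := by
        have h := three_le_length (G := Hgraph k) (u := Sum.inl (i,a)) (v := Sum.inl (j,b))
            (by simp [hij])
            (not_adj_cross hij ha)
            (fun m hm1 hm2 => no_common hij ha hbv m hm1 hm2)
            (p.map H.hom)
        exact le_of_le_of_eq h (SimpleGraph.Walk.length_map _ _)
      calc 3 ≤ p.length := hlen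
        _ = H.coe.dist _ _ := hp
        _ ≤ H.coe.diam := SimpleGraph.dist_le_diam hnetop
    calc H.verts.ncard - 1 ≤ 3*k := by omega
      _ ≤ H.coe.diam * k := Nat.mul_le_mul_right k h3
  · by_cases hd1 : H.coe.diam = 1
    · have hadj : ∀ (u v : H.verts), (u : (Fin 3 × Fin k) ⊕ Unit) ≠ (v : (Fin 3 × Fin k) ⊕ Unit) →
          (Hgraph k).Adj ↑u ↑v := by
        intro u v hne'
        have hdle : H.coe.dist u v ≤ 1 := hd1 ▸ SimpleGraph.dist_le_diam hnetop
        have hdp : 0 < H.coe.dist u v :=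
          hc.pos_dist_of_ne (fun h => hne' (congrArg Subtype.val h))
        have heq1 : H.coe.dist u v = 1 := by omega
        exact H.coe_adj_sub _ _ (SimpleGraph.dist_eq_one_iff_adj.mp heq1)
      have hcard : H.verts.ncard ≤ k + 1 := by
        by_cases hw : (Sum.inr () : (Fin 3 × Fin k) ⊕ Unit) ∈ H.verts
        · refine le_trans (hncard_of_sub specFin ?_) (by omega)
          intro u hu
          rcases u with ⟨i, a⟩ | uu
          · have haz : a.val = 0 := by
              have hne'' : (Sum.inl (i,a) : (Fin 3 × Fin k) ⊕ Unit) ≠ Sum.inr () := by simp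
              exact adj_inl_inr (hadj ⟨_, hu⟩ ⟨_, hw⟩ hne'')
            have haz' : a = z0 := Fin.ext (by rw [haz, hz0])
            subst haz'
            rcases htri i with rfl | rfl | rfl <;> simp [hspecFin]
          · cases uu; simp [hspecFin]
        · by_cases hnsp : ∃ (i0 : Fin 3) (a0 : Fin k), a0.val ≠ 0 ∧ Sum.inl (i0,a0) ∈ H.verts
          · obtain ⟨i0, a0, ha0, hm⟩ := hnsp
            refine le_trans (hncard_of_sub
                (Finset.image (fun a : Fin k => (Sum.inl (i0,a) : (Fin 3 × Fin k) ⊕ Unit))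
                  Finset.univ) ?_) ?_
            · intro u hu
              rcases u with ⟨i, a⟩ | uu
              · rcases eq_or_ne i i0 with rfl | hne'
                · simp
                · exfalso
                  have hne'' : (Sum.inl (i,a) : (Fin 3 × Fin k) ⊕ Unit) ≠ Sum.inl (i0,a0) := by
                    simp [hne']
                  rcases adj_inl_inl (hadj ⟨_, hu⟩ ⟨_, hm⟩ hne'') with ⟨e, _⟩ | ⟨_, _, e⟩
                  · exact hne' e
                  · exact ha0 e
              · cases uu; exact absurd hu hw
            · calc _ ≤ (Finset.univ : Finset (Fin k)).card := Finset.card_image_le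
                _ ≤ k + 1 := by simp
          · push_neg at hnsp
            refine le_trans (hncard_of_sub specFin ?_) (by omega)
            intro u hu
            rcases u with ⟨i, a⟩ | uu
            · have haz : a.val = 0 := by
                by_contra hcon
                exact (hnsp i a hcon) hu
              have haz' : a = z0 := Fin.ext (by rw [haz, hz0])
              subst haz'
              rcases htri i with rfl | rfl | rfl <;> simp [hspecFin]
            · cases uu; exact absurd hu hw
      rw [hd1, one_mul]; omega
    · have hd2 : 2 ≤ H.coe.diam := by omega
      have hcard : H.verts.ncard ≤ k + 4 := by
        by_cases hnsp : ∃ (i0 : Fin 3) (a0 : Fin k), a0.val ≠ 0 ∧ Sum.inl (i0,a0) ∈ H.verts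
        · obtain ⟨i0, a0, ha0, hm⟩ := hnsp
          set cliqueFin : Finset ((Fin 3 × Fin k) ⊕ Unit) :=
            Finset.image (fun a : Fin k => (Sum.inl (i0,a) : (Fin 3 × Fin k) ⊕ Unit))
              Finset.univ with hcf
          refine le_trans (hncard_of_sub (cliqueFin ∪ specFin) ?_) ?_
          · intro u hu
            rcases u with ⟨i, a⟩ | uu
            · rcases eq_or_ne a.val 0 with haz | haz
              · have haz' : a = z0 := Fin.ext (by rw [haz, hz0])
                subst haz'
                apply Finset.mem_union_right
                rcases htri i with rfl | rfl | rfl <;> simp [hspecFin]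
              · apply Finset.mem_union_left
                rcases eq_or_ne i i0 with rfl | hne'
                · simp [hcf]
                · exact absurd ⟨i, i0, a, a0, hne', haz, ha0, hu, hm⟩ hA
            · cases uu
              apply Finset.mem_union_right
              simp [hspecFin]
          · calc (cliqueFin ∪ specFin).card ≤ cliqueFin.card + specFin.card :=
                Finset.card_union_le _ _
              _ ≤ k + 4 := by
                  have himle : cliqueFin.card ≤ k := by
                    rw [hcf]
                    calc _ ≤ (Finset.univ : Finset (Fin k)).card := Finset.card_image_le
                      _ = k := by simp
                  omega
        · push_neg at hnsp
          refine le_trans (hncard_of_sub specFin ?_) (by omega)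
          intro u hu
          rcases u with ⟨i, a⟩ | uu
          · have haz : a.val = 0 := by
              by_contra hcon
              exact (hnsp i a hcon) hu
            have haz' : a = z0 := Fin.ext (by rw [haz, hz0])
            subst haz'
            rcases htri i with rfl | rfl | rfl <;> simp [hspecFin]
          · cases uu; simp [hspecFin]
      calc H.verts.ncard - 1 ≤ 2 * k := by omega
        _ ≤ H.coe.diam * k := Nat.mul_le_mul_right k hd2

open SimpleGraph in
/-- For `k ≥ 3`, the bandwidth of the block graph `H_k` is at least `k + 1` while its
local density is `k`; `H_k` has diameter 3, so its bandwidth exceeds its local density. -/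
theorem bandwidth_Hgraph_gt_localDensity (k : ℕ) (hk : 3 ≤ k) :
    k + 1 ≤ bandwidth (Hgraph k) ∧ localDensity (Hgraph k) = k ∧ (Hgraph k).diam = 3 := by
  obtain ⟨z1, hz1⟩ : ∃ z1 : Fin k, z1.val = 1 := ⟨⟨1, by omega⟩, rfl⟩
  have hspd := spec_preconnected_dist (G := Hgraph k) (sp k) (hsp1 k) (hsp2 k)
  have hpairs : 3 ≤ (Hgraph k).dist (Sum.inl (0, z1)) (Sum.inl (1, z1)) := by
    apply three_le_dist
    · simp
    · exact not_adj_cross (by decide) (by rw [hz1]; omega)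
    · exact fun m hm1 hm2 =>
        (no_common (by decide) (by rw [hz1]; omega) (by rw [hz1]; omega) m hm1 hm2).elim
    · exact hspd.1 _ _
  refine ⟨?_, ?_, ?_⟩
  · have hSne : {n | ∃ f : ((Fin 3 × Fin k) ⊕ Unit) → ℤ,
        Function.Injective f ∧ n = bwOf (Hgraph k) f}.Nonempty := by
      refine ⟨_, fun v => ((Fintype.equivFin ((Fin 3 × Fin k) ⊕ Unit) v : ℕ) : ℤ), ?_, rfl⟩
      intro a b hab
      have h' : ((Fintype.equivFin ((Fin 3 × Fin k) ⊕ Unit) a : ℕ) : ℤ)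
          = ((Fintype.equivFin ((Fin 3 × Fin k) ⊕ Unit) b : ℕ) : ℤ) := hab
      exact (Fintype.equivFin _).injective (Fin.val_injective (by exact_mod_cast h'))
    obtain ⟨f, hf, heq⟩ := Nat.sInf_mem hSne
    rw [bandwidth, heq]
    by_contra hcon
    push_neg at hcon
    apply bw_core k hk f hf
    intro u v huv
    have hbdd : BddAbove {n | ∃ u v, (Hgraph k).Adj u v ∧ n = (f u - f v).natAbs} := by
      apply Set.Finite.bddAbove
      apply Set.Finite.subset (Set.finite_range
        (fun p : ((Fin 3 × Fin k) ⊕ Unit) × ((Fin 3 × Fin k) ⊕ Unit) => (f p.1 - f p.2).natAbs))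
      rintro n ⟨u, v, -, rfl⟩
      exact ⟨(u, v), rfl⟩
    have hmem2 : (f u - f v).natAbs ∈
        {n | ∃ u v, (Hgraph k).Adj u v ∧ n = (f u - f v).natAbs} := ⟨u, v, huv, rfl⟩
    have hle := le_csSup hbdd hmem2
    rw [bwOf] at hcon
    have hnat : (f u - f v).natAbs ≤ k := by omega
    calc |f u - f v| = ((f u - f v).natAbs : ℤ) := Int.abs_eq_natAbs _
      _ ≤ (k : ℤ) := by exact_mod_cast hnat
  · have hub : ∀ d ∈ {d | ∃ H : (Hgraph k).Subgraph, H.coe.Connected ∧ 2 ≤ H.verts.ncard ∧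
        d = (H.verts.ncard - 1) ⌈/⌉ H.coe.diam}, d ≤ k := by
      rintro d ⟨H, hc, h2, rfl⟩
      exact ld_core k hk H hc h2
    have htop_pre : (⊤ : (Hgraph k).Subgraph).coe.Preconnected ∧
        ∀ u v, (⊤ : (Hgraph k).Subgraph).coe.dist u v ≤ 3 := by
      apply spec_preconnected_dist
        (s := fun u => ⟨sp k ↑u, by simp [SimpleGraph.Subgraph.verts_top]⟩)
      · intro u
        rcases hsp1 k ↑u with h | h
        · left; exact Subtype.ext h
        · right; exact h
      · intro u v
        rcases hsp2 k ↑u ↑v with h | h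
        · left; exact Subtype.ext h
        · right; exact h
    have htop_conn : (⊤ : (Hgraph k).Subgraph).coe.Connected := by
      have : Nonempty ((⊤ : (Hgraph k).Subgraph).verts) :=
        ⟨⟨Sum.inr (), by simp [SimpleGraph.Subgraph.verts_top]⟩⟩
      exact ⟨htop_pre.1⟩
    have htop_ncard : (⊤ : (Hgraph k).Subgraph).verts.ncard = 3*k+1 := by
      rw [SimpleGraph.Subgraph.verts_top, Set.ncard_univ, Nat.card_eq_fintype_card, card_HV]
    have htop_dist3 : 3 ≤ (⊤ : (Hgraph k).Subgraph).coe.dist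
        ⟨Sum.inl (0, z1), by simp [SimpleGraph.Subgraph.verts_top]⟩
        ⟨Sum.inl (1, z1), by simp [SimpleGraph.Subgraph.verts_top]⟩ := by
      apply three_le_dist
      · intro h
        have := congrArg Subtype.val h
        simp at this
      · intro h
        have h' : (Hgraph k).Adj (Sum.inl (0, z1)) (Sum.inl (1, z1)) :=
          (⊤ : (Hgraph k).Subgraph).coe_adj_sub _ _ h
        exact not_adj_cross (by decide) (by rw [hz1]; omega) h'
      · intro m hm1 hm2
        have hm1' : (Hgraph k).Adj (Sum.inl (0, z1)) ↑m :=
          (⊤ : (Hgraph k).Subgraph).coe_adj_sub _ _ hm1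
        have hm2' : (Hgraph k).Adj ↑m (Sum.inl (1, z1)) :=
          (⊤ : (Hgraph k).Subgraph).coe_adj_sub _ _ hm2
        exact no_common (i := 0) (j := 1) (a := z1) (b := z1) (by decide) (by rw [hz1]; omega) (by rw [hz1]; omega) ↑m hm1' hm2' 
      · exact htop_pre.1 _ _
    have htop_diam : (⊤ : (Hgraph k).Subgraph).coe.diam = 3 :=
      diam_eq_three' htop_pre.1 htop_pre.2 htop_dist3
    have hkmem : k ∈ {d | ∃ H : (Hgraph k).Subgraph, H.coe.Connected ∧ 2 ≤ H.verts.ncard ∧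
        d = (H.verts.ncard - 1) ⌈/⌉ H.coe.diam} := by
      refine ⟨⊤, htop_conn, by rw [htop_ncard]; omega, ?_⟩
      rw [htop_ncard, htop_diam, Nat.ceilDiv_eq_add_pred_div]
      omega
    rw [localDensity]
    exact le_antisymm (csSup_le ⟨k, hkmem⟩ hub) (le_csSup ⟨k, fun d hd => hub d hd⟩ hkmem)
  · exact diam_eq_three' hspd.1 hspd.2 hpairs
end

section
/- For every integer k ≥ 3, the graph H_k − w obtained from H_k by deleting the vertex w has bandwidth exactly k, i.e., B(H_k − w) = k. -/
/-- Adjacency in `H_k − w`, unfolded. -/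
lemma hadj (k : ℕ) (i j : Fin 3) (a b : Fin k) :
    ((Hgraph k).comap Sum.inl).Adj (i,a) (j,b) ↔
      ((i = j ∧ a ≠ b) ∨ (i ≠ j ∧ a.val = 0 ∧ b.val = 0)) := by
  simp only [SimpleGraph.comap_adj, Hgraph, SimpleGraph.fromRel_adj, HRel, ne_eq,
    Sum.inl.injEq, Prod.mk.injEq, not_and]
  constructor
  · rintro ⟨hne, h | h⟩
    · exact h
    · rcases h with ⟨h1, h2⟩ | ⟨h1, h2, h3⟩
      · exact Or.inl ⟨h1.symm, fun e => h2 e.symm⟩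
      · exact Or.inr ⟨fun e => h1 e.symm, h3, h2⟩
  · rintro (⟨h1, h2⟩ | ⟨h1, h2, h3⟩)
    · exact ⟨fun e ha => h2 ha, Or.inl (Or.inl ⟨h1, h2⟩)⟩
    · exact ⟨fun e => absurd e h1, Or.inl (Or.inr ⟨h1, h2, h3⟩)⟩

/-- An explicit labeling of `H_k − w` witnessing bandwidth at most `k`:
clique `X` gets `{0,…,k−1}` with `x ↦ k−1`; clique `Y` gets `{k,…,2k−2} ∪ {2k}`
with `y ↦ k`; clique `Z` gets `{2k−1} ∪ {2k+1,…,3k−1}` with `z ↦ 2k−1`. -/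
noncomputable def glab (k : ℕ) : Fin 3 × Fin k → ℤ := fun p =>
  if p.1 = 0 then (k : ℤ) - 1 - p.2.val
  else if p.1 = 1 then (if p.2.val = k - 1 then 2 * k else (k : ℤ) + p.2.val)
  else (if p.2.val = 0 then 2 * (k : ℤ) - 1 else 2 * (k : ℤ) + p.2.val)

set_option linter.unreachableTactic false in
set_option linter.unusedTactic false in
lemma glab_inj (k : ℕ) (hk : 3 ≤ k) : Function.Injective (glab k) := by
  rintro ⟨i, a⟩ ⟨j, b⟩ h
  have ha := a.isLt
  have hb := b.isLt
  fin_cases i <;> fin_cases j <;>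
    simp only [glab, Fin.isValue] at h ⊢ <;>
    norm_num at h ⊢ <;>
    (try split at h) <;> (try split at h) <;>
    first
      | (refine Prod.ext rfl (Fin.ext ?_); omega)
      | omega

lemma glab_bw (k : ℕ) (hk : 3 ≤ k) :
    bwOf ((Hgraph k).comap Sum.inl) (glab k) ≤ k := by
  apply csSup_le
  · refine ⟨(glab k (0, ⟨0, by omega⟩) - glab k (1, ⟨0, by omega⟩)).natAbs,
      (0, ⟨0, by omega⟩), (1, ⟨0, by omega⟩), ?_, rfl⟩
    rw [hadj]
    exact Or.inr ⟨by decide, rfl, rfl⟩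
  · rintro n ⟨⟨i, a⟩, ⟨j, b⟩, hadj', rfl⟩
    rw [hadj] at hadj'
    have ha := a.isLt
    have hb := b.isLt
    rcases hadj' with ⟨hij, hab⟩ | ⟨hij, ha0, hb0⟩ <;>
      [subst hij; skip] <;>
      fin_cases i <;> (try fin_cases j) <;>
      simp only [glab, Fin.isValue] at * <;>
      norm_num at * <;>
      (try split) <;> (try split) <;> omega

lemma lower_bound (k : ℕ) (hk : 3 ≤ k) (f : Fin 3 × Fin k → ℤ)
    (hf : Function.Injective f) : k ≤ bwOf ((Hgraph k).comap Sum.inl) f := by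
  set G := (Hgraph k).comap (Sum.inl : Fin 3 × Fin k → _) with hG
  set B := bwOf G f with hB
  -- every edge difference is at most B
  have hbdd : BddAbove {n | ∃ u v, G.Adj u v ∧ n = (f u - f v).natAbs} := by
    apply Set.Finite.bddAbove
    apply Set.Finite.subset (Set.finite_range
      (fun p : (Fin 3 × Fin k) × (Fin 3 × Fin k) => (f p.1 - f p.2).natAbs))
    rintro n ⟨u, v, _, rfl⟩
    exact ⟨(u, v), rfl⟩
  have hedge : ∀ u v, G.Adj u v → (f u - f v).natAbs ≤ B := fun u v h =>
    le_csSup hbdd ⟨u, v, h, rfl⟩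
  by_contra hlt
  push_neg at hlt
  -- each clique occupies an interval of k consecutive integers
  have key : ∀ i : Fin 3, ∃ m : ℤ,
      (∀ a : Fin k, m ≤ f (i, a) ∧ f (i, a) ≤ m + k - 1) ∧
      (∀ t : ℤ, m ≤ t → t ≤ m + k - 1 → ∃ a : Fin k, f (i, a) = t) := by
    intro i
    have hinj : Function.Injective (fun a : Fin k => f (i, a)) := by
      intro a b h
      have := hf h
      exact (Prod.mk.injEq _ _ _ _ ▸ this).2
    set T : Finset ℤ := Finset.image (fun a : Fin k => f (i, a)) Finset.univ with hT
    have hcard : T.card = k := by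
      rw [hT, Finset.card_image_of_injective _ hinj, Finset.card_univ, Fintype.card_fin]
    have hTne : T.Nonempty := by
      rw [← Finset.card_pos, hcard]; omega
    set m := T.min' hTne with hm
    obtain ⟨a₀, -, ha₀⟩ := Finset.mem_image.mp (T.min'_mem hTne)
    have hbound : ∀ a : Fin k, m ≤ f (i, a) ∧ f (i, a) ≤ m + k - 1 := by
      intro a
      have h1 : m ≤ f (i, a) := T.min'_le _ (Finset.mem_image_of_mem _ (Finset.mem_univ a))
      refine ⟨h1, ?_⟩
      by_cases hae : a = a₀
      · subst hae; rw [ha₀]; omega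
      · have hadj' : G.Adj (i, a) (i, a₀) := (hadj k i i a a₀).mpr (Or.inl ⟨rfl, hae⟩)
        have := hedge _ _ hadj'
        rw [ha₀] at this
        omega
    refine ⟨m, hbound, ?_⟩
    have hsub : T ⊆ Finset.Icc m (m + k - 1) := by
      intro t ht
      obtain ⟨a, -, rfl⟩ := Finset.mem_image.mp ht
      exact Finset.mem_Icc.mpr (hbound a)
    have hicc : (Finset.Icc m (m + k - 1)).card = k := by
      rw [Int.card_Icc]; omega
    have heq : T = Finset.Icc m (m + k - 1) :=
      Finset.eq_of_subset_of_card_le hsub (by omega)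
    intro t h1 h2
    have : t ∈ T := heq ▸ Finset.mem_Icc.mpr ⟨h1, h2⟩
    obtain ⟨a, -, ha⟩ := Finset.mem_image.mp this
    exact ⟨a, ha⟩
  obtain ⟨m0, hb0, hs0⟩ := key 0
  obtain ⟨m1, hb1, hs1⟩ := key 1
  obtain ⟨m2, hb2, hs2⟩ := key 2
  -- the intervals are pairwise separated by at least k
  have gap : ∀ (i j : Fin 3) (mi mj : ℤ), i ≠ j →
      (∀ t : ℤ, mi ≤ t → t ≤ mi + k - 1 → ∃ a : Fin k, f (i, a) = t) →
      (∀ t : ℤ, mj ≤ t → t ≤ mj + k - 1 → ∃ a : Fin k, f (j, a) = t) →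
      mi + k ≤ mj ∨ mj + k ≤ mi := by
    intro i j mi mj hij hi hj
    by_contra hc
    push_neg at hc
    obtain ⟨h1, h2⟩ := hc
    obtain ⟨a, ha⟩ := hi (max mi mj) (le_max_left _ _) (by omega)
    obtain ⟨b, hb⟩ := hj (max mi mj) (le_max_right _ _) (by omega)
    have : (i, a) = (j, b) := hf (ha.trans hb.symm)
    exact hij (Prod.mk.injEq _ _ _ _ ▸ this).1
  have g01 := gap 0 1 m0 m1 (by decide) hs0 hs1
  have g02 := gap 0 2 m0 m2 (by decide) hs0 hs2
  have g12 := gap 1 2 m1 m2 (by decide) hs1 hs2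
  -- the triangle x, y, z
  have h0k : 0 < k := by omega
  have e01 := hedge (0, ⟨0, h0k⟩) (1, ⟨0, h0k⟩)
    ((hadj k 0 1 _ _).mpr (Or.inr ⟨by decide, rfl, rfl⟩))
  have e02 := hedge (0, ⟨0, h0k⟩) (2, ⟨0, h0k⟩)
    ((hadj k 0 2 _ _).mpr (Or.inr ⟨by decide, rfl, rfl⟩))
  have e12 := hedge (1, ⟨0, h0k⟩) (2, ⟨0, h0k⟩)
    ((hadj k 1 2 _ _).mpr (Or.inr ⟨by decide, rfl, rfl⟩))
  have x0 := hb0 ⟨0, h0k⟩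
  have x1 := hb1 ⟨0, h0k⟩
  have x2 := hb2 ⟨0, h0k⟩
  omega

/-- For `k ≥ 3`, the graph `H_k − w` obtained from `H_k` by deleting the vertex `w`
(the induced subgraph on the remaining vertices) has bandwidth exactly `k`. -/
theorem bandwidth_Hgraph_del_w (k : ℕ) (hk : 3 ≤ k) :
    bandwidth ((Hgraph k).comap (Sum.inl : Fin 3 × Fin k → (Fin 3 × Fin k) ⊕ Unit)) = k := by
  apply le_antisymm
  · exact le_trans (Nat.sInf_le ⟨glab k, glab_inj k hk, rfl⟩) (glab_bw k hk)
  · refine le_csInf ⟨bwOf ((Hgraph k).comap Sum.inl) (glab k), glab k, glab_inj k hk, rfl⟩ ?_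
    rintro n ⟨f, hf, rfl⟩
    exact lower_bound k hk f hf
end

section
/- Let G be a finite simple graph, let X be a set of vertices of G each of which has at least one leaf neighbor, and let L be the set of all leaves of G adjacent to vertices of X. Suppose f : V(G) → ℤ is a faithful injection that maps X bijectively onto a set of consecutive integers {α, α+1, …, β}, and that α − m ≤ f(u) ≤ β + m for every u ∈ L. Then |f(u) − f(v)| ≤ m for every edge uv of G with u ∈ L and v ∈ X. -/
/-- A leaf of a graph is a vertex with exactly one neighbor (degree 1). -/
def IsLeaf {V : Type*} (G : SimpleGraph V) (v : V) : Prop :=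
  (G.neighborSet v).ncard = 1

/-- A labeling `f` is faithful: whenever `u`, `v` are leaves adjacent to `x`, `y`
respectively and `f x < f y`, then `f u < f v`. -/
def IsFaithful {V : Type*} (G : SimpleGraph V) (f : V → ℤ) : Prop :=
  ∀ u v x y, IsLeaf G u → IsLeaf G v → G.Adj u x → G.Adj v y → f x < f y → f u < f v

lemma leaf_unique_nbr {V : Type*} (G : SimpleGraph V) {u a b : V} (h : IsLeaf G u)
    (ha : G.Adj u a) (hb : G.Adj u b) : a = b := by
  obtain ⟨c, hc⟩ := Set.ncard_eq_one.mp h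
  have ha' : a ∈ G.neighborSet u := ha
  have hb' : b ∈ G.neighborSet u := hb
  rw [hc, Set.mem_singleton_iff] at ha' hb'
  rw [ha', hb']

lemma helper_upper {V : Type*} [Fintype V] (G : SimpleGraph V)
    (X L : Set V) (m : ℕ) (α β : ℤ) (f : V → ℤ)
    (hX : ∀ x ∈ X, ∃ u, IsLeaf G u ∧ G.Adj u x)
    (hL : L = {u | IsLeaf G u ∧ ∃ x ∈ X, G.Adj u x})
    (hinj : Function.Injective f) (hfaith : IsFaithful G f)
    (hbij : Set.BijOn f X (Set.Icc α β))
    (hrange : ∀ u ∈ L, α - m ≤ f u ∧ f u ≤ β + m) :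
    ∀ u ∈ L, ∀ x ∈ X, G.Adj u x → f u ≤ f x + m := by
  intro u hu x hx hadj
  have hule : IsLeaf G u := by rw [hL] at hu; exact hu.1
  have hfx : f x ∈ Set.Icc α β := hbij.mapsTo hx
  have hfxa := hfx.1
  have hfxb := hfx.2
  have hfu : f u ≤ β + m := (hrange u hu).2
  have key : ∀ j : ℤ, ∃ w : V, j ∈ Finset.Icc (f x + 1) β →
      IsLeaf G w ∧ (∃ x' ∈ X, G.Adj w x' ∧ f x' = j) ∧ f u + 1 ≤ f w ∧ f w ≤ β + m := by
    intro j
    by_cases hj : j ∈ Finset.Icc (f x + 1) β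
    · simp only [Finset.mem_Icc] at hj
      have hjI : j ∈ Set.Icc α β := ⟨by omega, hj.2⟩
      obtain ⟨x', hx', hfx'⟩ := hbij.surjOn hjI
      obtain ⟨w, hwleaf, hwadj⟩ := hX x' hx'
      have hlt : f u < f w := hfaith u w x x' hule hwleaf hadj hwadj (by omega)
      have hwL : w ∈ L := by rw [hL]; exact ⟨hwleaf, x', hx', hwadj⟩
      exact ⟨w, fun _ => ⟨hwleaf, ⟨x', hx', hwadj, hfx'⟩, by omega, (hrange w hwL).2⟩⟩
    · exact ⟨u, fun h => absurd h hj⟩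
  choose g hg using key
  have hcard : (Finset.Icc (f x + 1) β).card ≤ (Finset.Icc (f u + 1) (β + m)).card := by
    apply Finset.card_le_card_of_injOn (fun j => f (g j))
    · intro j hj
      obtain ⟨_, _, h1, h2⟩ := hg j hj
      simp only [Finset.coe_Icc, Set.mem_Icc, Finset.mem_coe, Finset.mem_Icc]
      omega
    · intro j₁ h₁ j₂ h₂ heq
      obtain ⟨hl₁, ⟨x₁, hx₁, ha₁, he₁⟩, _⟩ := hg j₁ (by simpa using h₁)
      obtain ⟨hl₂, ⟨x₂, hx₂, ha₂, he₂⟩, _⟩ := hg j₂ (by simpa using h₂)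
      have hgg : g j₁ = g j₂ := hinj heq
      rw [hgg] at ha₁
      have := leaf_unique_nbr G hl₂ ha₁ ha₂
      rw [this] at he₁
      omega
  rw [Int.card_Icc, Int.card_Icc] at hcard
  omega

/-- Lemma 2: if `X` is a set of vertices each having a leaf neighbor, `L` the set of all
leaves adjacent to `X`, and a faithful injection `f` maps `X` bijectively onto consecutive
positions `{α, …, β}` while placing `L` between `α - m` and `β + m`, then every edge from
`L` to `X` has difference at most `m`. -/
theorem faithful_leaf_edges_le {V : Type*} [Fintype V] (G : SimpleGraph V)
    (X L : Set V) (m : ℕ) (α β : ℤ) (f : V → ℤ)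
    (hX : ∀ x ∈ X, ∃ u, IsLeaf G u ∧ G.Adj u x)
    (hL : L = {u | IsLeaf G u ∧ ∃ x ∈ X, G.Adj u x})
    (hinj : Function.Injective f) (hfaith : IsFaithful G f)
    (hbij : Set.BijOn f X (Set.Icc α β))
    (hrange : ∀ u ∈ L, α - m ≤ f u ∧ f u ≤ β + m) :
    ∀ u ∈ L, ∀ x ∈ X, G.Adj u x → (f u - f x).natAbs ≤ m := by
  intro u hu x hx hadj
  have h1 := helper_upper G X L m α β f hX hL hinj hfaith hbij hrange u hu x hx hadj
  have hinj' : Function.Injective (fun v => -f v) := by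
    intro a b h
    exact hinj (neg_inj.mp h)
  have hfaith' : IsFaithful G (fun v => -f v) := by
    intro a b p q hla hlb haa hab hlt
    simp only at hlt ⊢
    have := hfaith b a q p hlb hla hab haa (by omega)
    omega
  have hbij' : Set.BijOn (fun v => -f v) X (Set.Icc (-β) (-α)) := by
    refine ⟨?_, ?_, ?_⟩
    · intro v hv
      have := hbij.mapsTo hv
      simp only [Set.mem_Icc] at this ⊢
      omega
    · intro a ha b hb h
      exact hbij.injOn ha hb (neg_inj.mp h)
    · intro y hy
      simp only [Set.mem_Icc] at hy
      obtain ⟨v, hv, hfv⟩ := hbij.surjOn (show -y ∈ Set.Icc α β by simp only [Set.mem_Icc]; omega)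
      exact ⟨v, hv, by simp only; omega⟩
  have hrange' : ∀ w ∈ L, -β - m ≤ (fun v => -f v) w ∧ (fun v => -f v) w ≤ -α + m := by
    intro w hw
    have := hrange w hw
    simp only
    omega
  have h2 := helper_upper G X L m (-β) (-α) (fun v => -f v) hX hL hinj' hfaith' hbij' hrange'
      u hu x hx hadj
  omega
end
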